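/- arXiv:0906.4797 — 2 statements merged into one kernel-verified Lean document; each statement's English description precedes it below -/
import Mathlib

section
/- Let U = (m, u₁, u₂) solve the symmetric system ∂_t U + Σ_{a=1,2}(u_a I + (m/2) J_a) ∂_a U = L(U), where J₁, J₂ are the symmetric matrices J₁ = [[0,1,0],[1,0,0],[0,0,0]], J₂ = [[0,0,1],[0,0,0],[1,0,0]], and L(U) = −(∇·u, ∂₁m − u₂, ∂₂m + u₁). If additionally the zero-relative-vorticity constraint ∇×u = m + m²/4 holds, then U satisfies the quasilinear Klein–Gordon system ∂_tt U − ΔU + U = Σ_{i,j=1}^2 A_{ij}(U)∂_i∂_j U + Σ_{j=1}^2 A_{0j}(U)∂_t∂_j U + R(Ũ⊗Ũ), where each A_{ij}(U) and A_{0j}(U) is a symmetric 3×3 matrix depending linearly on U, A_{ij} = A_{ji}, and R is a linear function of the tensor product Ũ⊗Ũ with Ũ = (U, ∂_t U, ∂₁U, ∂₂U). -/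
open TensorProduct

noncomputable def pdt (f : ℝ → ℝ → ℝ → ℝ) (t x y : ℝ) : ℝ := deriv (fun s => f s x y) t
noncomputable def pdx (f : ℝ → ℝ → ℝ → ℝ) (t x y : ℝ) : ℝ := deriv (fun s => f t s y) x
noncomputable def pdy (f : ℝ → ℝ → ℝ → ℝ) (t x y : ℝ) : ℝ := deriv (fun s => f t x s) y

/-- Time derivative of a `Fin 3`-vector-valued function of `(t,x₁,x₂)`, componentwise. -/
noncomputable def vdt (V : ℝ → ℝ → ℝ → Fin 3 → ℝ) (t x y : ℝ) (i : Fin 3) : ℝ :=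
  deriv (fun s => V s x y i) t
noncomputable def vd1 (V : ℝ → ℝ → ℝ → Fin 3 → ℝ) (t x y : ℝ) (i : Fin 3) : ℝ :=
  deriv (fun s => V t s y i) x
noncomputable def vd2 (V : ℝ → ℝ → ℝ → Fin 3 → ℝ) (t x y : ℝ) (i : Fin 3) : ℝ :=
  deriv (fun s => V t x s i) y

/-- The two spatial derivatives, indexed by `Fin 2`. -/
noncomputable def vsp : Fin 2 → (ℝ → ℝ → ℝ → Fin 3 → ℝ) → ℝ → ℝ → ℝ → Fin 3 → ℝ :=
  ![vd1, vd2]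

/-- The state vector `U = (m, u₁, u₂)`. -/
def Uvec (m u1 u2 : ℝ → ℝ → ℝ → ℝ) : ℝ → ℝ → ℝ → Fin 3 → ℝ :=
  fun t x y => ![m t x y, u1 t x y, u2 t x y]

/-! ### Auxiliary infrastructure: directional derivatives on `ℝ × ℝ × ℝ` -/

noncomputable section StmtAux

abbrev E3' := ℝ × ℝ × ℝ

noncomputable def DD (v : E3') (F : E3' → ℝ) : E3' → ℝ := fun p => fderiv ℝ F p v

def ee1 : E3' := (1,0,0)
def ee2 : E3' := (0,1,0)
def ee3 : E3' := (0,0,1)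

lemma contDiff_DD (v : E3') {F : E3' → ℝ} (hF : ContDiff ℝ (⊤ : ℕ∞) F) : ContDiff ℝ (⊤ : ℕ∞) (DD v F) :=
  (hF.fderiv_right ((by simp))).clm_apply contDiff_const

lemma DD_swap {F : E3' → ℝ} (hF : ContDiff ℝ (⊤ : ℕ∞) F) (v w : E3') (p : E3') :
    DD v (DD w F) p = DD w (DD v F) p := by
  have hdF : Differentiable ℝ F := hF.differentiable (by simp)
  have h2 : Differentiable ℝ (fderiv ℝ F) :=
    (hF.fderiv_right (m := (⊤ : ℕ∞)) (by simp)).differentiable (by simp)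
  have hsymm : ∀ a b : E3', fderiv ℝ (fderiv ℝ F) p a b = fderiv ℝ (fderiv ℝ F) p b a := by
    intro a b
    exact second_derivative_symmetric (fun y => (hdF y).hasFDerivAt) (h2 p).hasFDerivAt a b
  have expand : ∀ b a : E3', DD b (DD a F) p = fderiv ℝ (fderiv ℝ F) p b a := by
    intro b a
    have : DD a F = fun q => (fderiv ℝ F q) a := rfl
    rw [this]
    have := fderiv_clm_apply (𝕜 := ℝ) (c := fderiv ℝ F) (u := fun _ => a) (h2 p) (differentiableAt_const a)
    simp only [DD]
    rw [this]
    simp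
  rw [expand v w, expand w v, hsymm]

lemma pdt_eq {F : E3' → ℝ} (hF : Differentiable ℝ F) {f : ℝ → ℝ → ℝ → ℝ}
    (hf : ∀ t x y, f t x y = F (t, x, y)) (t x y : ℝ) :
    pdt f t x y = DD ee1 F (t, x, y) := by
  have hc : HasDerivAt (fun s : ℝ => (s, x, y) : ℝ → E3') (1, (0:ℝ), (0:ℝ)) t :=
    (hasDerivAt_id t).prodMk (hasDerivAt_const t ((x : ℝ), (y : ℝ)))
  have h := (hF (t, x, y)).hasFDerivAt.comp_hasDerivAt t hc
  have h2 : HasDerivAt (fun s => f s x y) ((fderiv ℝ F (t,x,y)) (1,(0:ℝ),(0:ℝ))) t := by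
    refine h.congr_deriv rfl |>.congr_of_eventuallyEq ?_
    filter_upwards with s; simp [Function.comp, hf]
  simpa [pdt, DD, ee1] using h2.deriv

lemma pdx_eq {F : E3' → ℝ} (hF : Differentiable ℝ F) {f : ℝ → ℝ → ℝ → ℝ}
    (hf : ∀ t x y, f t x y = F (t, x, y)) (t x y : ℝ) :
    pdx f t x y = DD ee2 F (t, x, y) := by
  have hc : HasDerivAt (fun s : ℝ => (t, s, y) : ℝ → E3') (0, (1:ℝ), (0:ℝ)) x :=
    (hasDerivAt_const x t).prodMk ((hasDerivAt_id x).prodMk (hasDerivAt_const x y))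
  have h := (hF (t, x, y)).hasFDerivAt.comp_hasDerivAt x hc
  have h2 : HasDerivAt (fun s => f t s y) ((fderiv ℝ F (t,x,y)) (0,(1:ℝ),(0:ℝ))) x := by
    refine h.congr_deriv rfl |>.congr_of_eventuallyEq ?_
    filter_upwards with s; simp [Function.comp, hf]
  simpa [pdx, DD, ee2] using h2.deriv

lemma pdy_eq {F : E3' → ℝ} (hF : Differentiable ℝ F) {f : ℝ → ℝ → ℝ → ℝ}
    (hf : ∀ t x y, f t x y = F (t, x, y)) (t x y : ℝ) :
    pdy f t x y = DD ee3 F (t, x, y) := by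
  have hc : HasDerivAt (fun s : ℝ => (t, x, s) : ℝ → E3') (0, (0:ℝ), (1:ℝ)) y :=
    (hasDerivAt_const y t).prodMk ((hasDerivAt_const y x).prodMk (hasDerivAt_id y))
  have h := (hF (t, x, y)).hasFDerivAt.comp_hasDerivAt y hc
  have h2 : HasDerivAt (fun s => f t x s) ((fderiv ℝ F (t,x,y)) (0,(0:ℝ),(1:ℝ))) y := by
    refine h.congr_deriv rfl |>.congr_of_eventuallyEq ?_
    filter_upwards with s; simp [Function.comp, hf]
  simpa [pdy, DD, ee3] using h2.deriv

lemma DD_add {A B : E3' → ℝ} (hA : Differentiable ℝ A) (hB : Differentiable ℝ B) (v p) :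
    DD v (fun q => A q + B q) p = DD v A p + DD v B p := by
  simp only [DD]
  rw [show (fun q => A q + B q) = A + B from rfl]
  rw [((hA p).hasFDerivAt.add ((hB p).hasFDerivAt)).fderiv]
  simp

lemma DD_mul {A B : E3' → ℝ} (hA : Differentiable ℝ A) (hB : Differentiable ℝ B) (v p) :
    DD v (fun q => A q * B q) p = A p * DD v B p + B p * DD v A p := by
  simp only [DD]
  rw [show (fun q => A q * B q) = A * B from rfl]
  rw [((hA p).hasFDerivAt.mul ((hB p).hasFDerivAt)).fderiv]
  simp

lemma DD_neg {A : E3' → ℝ} (v p) : DD v (fun q => -A q) p = -DD v A p := by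
  simp [DD, fderiv_neg]

lemma DD_sub {A B : E3' → ℝ} (hA : Differentiable ℝ A) (hB : Differentiable ℝ B) (v p) :
    DD v (fun q => A q - B q) p = DD v A p - DD v B p := by
  simp only [DD]
  rw [show (fun q => A q - B q) = A - B from rfl]
  rw [((hA p).hasFDerivAt.sub ((hB p).hasFDerivAt)).fderiv]
  simp

lemma DD_const (c : ℝ) (v p) : DD v (fun _ => c) p = 0 := by simp [DD]

lemma DD_div_const {A : E3' → ℝ} (hA : Differentiable ℝ A) (v p) (c : ℝ) :
    DD v (fun q => A q / c) p = DD v A p / c := by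
  have h : (fun q => A q / c) = fun q => A q * (1/c) := by funext q; ring
  rw [h]
  simp only [DD]
  rw [((hA p).hasFDerivAt.mul_const (1/c)).fderiv]
  simp; ring

lemma DD_sq {A : E3' → ℝ} (hA : Differentiable ℝ A) (v p) :
    DD v (fun q => A q ^ 2) p = 2 * A p * DD v A p := by
  have h2 : (fun q => A q ^ 2) = fun q => A q * A q := by funext q; ring
  rw [h2, DD_mul hA hA]; ring

/-! ### The coefficient matrices and quadratic source term -/

/-- coefficient matrices: `KA a b i` is the coefficient of `v i` in `A a b v`. -/
def KA : Fin 2 → Fin 2 → Fin 3 → Matrix (Fin 3) (Fin 3) ℝ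
  | 0, 0, 0 => !![1/2,0,0; 0,1/2,0; 0,0,0]
  | 0, 0, 1 => !![0,1,0; 1,0,0; 0,0,0]
  | 0, 0, 2 => !![0,0,0; 0,0,0; 0,0,0]
  | 0, 1, 0 => !![0,0,0; 0,0,1/4; 0,1/4,0]
  | 0, 1, 1 => !![0,0,1/2; 0,0,0; 1/2,0,0]
  | 0, 1, 2 => !![0,1/2,0; 1/2,0,0; 0,0,0]
  | 1, 0, 0 => !![0,0,0; 0,0,1/4; 0,1/4,0]
  | 1, 0, 1 => !![0,0,1/2; 0,0,0; 1/2,0,0]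
  | 1, 0, 2 => !![0,1/2,0; 1/2,0,0; 0,0,0]
  | 1, 1, 0 => !![1/2,0,0; 0,0,0; 0,0,1/2]
  | 1, 1, 1 => !![0,0,0; 0,0,0; 0,0,0]
  | 1, 1, 2 => !![0,0,1; 0,0,0; 1,0,0]

def KA0 : Fin 2 → Fin 3 → Matrix (Fin 3) (Fin 3) ℝ
  | 0, 0 => !![0,-(1/2),0; -(1/2),0,0; 0,0,0]
  | 0, 1 => !![-1,0,0; 0,-1,0; 0,0,-1]
  | 0, 2 => !![0,0,0; 0,0,0; 0,0,0]
  | 1, 0 => !![0,0,-(1/2); 0,0,0; -(1/2),0,0]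
  | 1, 1 => !![0,0,0; 0,0,0; 0,0,0]
  | 1, 2 => !![-1,0,0; 0,-1,0; 0,0,-1]

def Alin (a b : Fin 2) : (Fin 3 → ℝ) →ₗ[ℝ] Matrix (Fin 3) (Fin 3) ℝ :=
  (LinearMap.proj 0).smulRight (KA a b 0) + (LinearMap.proj 1).smulRight (KA a b 1)
    + (LinearMap.proj 2).smulRight (KA a b 2)

def A0lin (j : Fin 2) : (Fin 3 → ℝ) →ₗ[ℝ] Matrix (Fin 3) (Fin 3) ℝ :=
  (LinearMap.proj 0).smulRight (KA0 j 0) + (LinearMap.proj 1).smulRight (KA0 j 1)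
    + (LinearMap.proj 2).smulRight (KA0 j 2)

lemma Alin_apply (a b : Fin 2) (v : Fin 3 → ℝ) :
    Alin a b v = v 0 • KA a b 0 + v 1 • KA a b 1 + v 2 • KA a b 2 := by
  simp [Alin]

lemma A0lin_apply (j : Fin 2) (v : Fin 3 → ℝ) :
    A0lin j v = v 0 • KA0 j 0 + v 1 • KA0 j 1 + v 2 • KA0 j 2 := by
  simp [A0lin]

lemma isSymm_smul (c : ℝ) {K : Matrix (Fin 3) (Fin 3) ℝ} (h : K.IsSymm) : (c • K).IsSymm := by
  unfold Matrix.IsSymm at *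
  rw [Matrix.transpose_smul, h]

lemma isSymm_add {K L : Matrix (Fin 3) (Fin 3) ℝ} (hK : K.IsSymm) (hL : L.IsSymm) :
    (K + L).IsSymm := by
  unfold Matrix.IsSymm at *
  rw [Matrix.transpose_add, hK, hL]

lemma KA_symm : ∀ a b i, (KA a b i).IsSymm := by
  intro a b i
  fin_cases a <;> fin_cases b <;> fin_cases i <;>
    (ext r c; fin_cases r <;> fin_cases c <;> rfl)

lemma KA0_symm : ∀ j i, (KA0 j i).IsSymm := by
  intro j i
  fin_cases j <;> fin_cases i <;>
    (ext r c; fin_cases r <;> fin_cases c <;> rfl)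

lemma Alin_symm (a b : Fin 2) (v : Fin 3 → ℝ) : (Alin a b v).IsSymm := by
  rw [Alin_apply]
  exact isSymm_add (isSymm_add (isSymm_smul _ (KA_symm a b 0)) (isSymm_smul _ (KA_symm a b 1)))
    (isSymm_smul _ (KA_symm a b 2))

lemma A0lin_symm (j : Fin 2) (v : Fin 3 → ℝ) : (A0lin j v).IsSymm := by
  rw [A0lin_apply]
  exact isSymm_add (isSymm_add (isSymm_smul _ (KA0_symm j 0)) (isSymm_smul _ (KA0_symm j 1)))
    (isSymm_smul _ (KA0_symm j 2))

lemma Alin_comm (a b : Fin 2) : Alin a b = Alin b a := by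
  fin_cases a <;> fin_cases b <;> rfl

/-- the bilinear form giving the quadratic source term. -/
def Bbil : (Fin 4 → Fin 3 → ℝ) →ₗ[ℝ] (Fin 4 → Fin 3 → ℝ) →ₗ[ℝ] (Fin 3 → ℝ) :=
  LinearMap.mk₂ ℝ
    (fun v w => ![
      -(1/4) * (v 0 0 * w 0 0) - (1/2) * (v 1 0 * w 2 1) - (1/2) * (v 1 0 * w 3 2)
        - v 2 0 * w 1 1 + (1/2) * (v 2 0 * w 2 0) - v 3 0 * w 1 2
        + (1/2) * (v 3 0 * w 3 0) + v 2 1 * w 2 1 + 2 * (v 3 1 * w 2 2) + v 3 2 * w 3 2,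
      -(1/2) * (v 1 0 * w 2 0) + (3/2) * (v 2 0 * w 2 1) + (1/2) * (v 2 0 * w 3 2)
        + v 3 0 * w 2 2 - v 0 1 * w 2 2 - v 1 1 * w 2 1 - v 3 1 * w 1 2 - v 0 2 * w 3 2,
      -(1/2) * (v 1 0 * w 3 0) + v 2 0 * w 3 1 + (1/2) * (v 3 0 * w 2 1)
        + (3/2) * (v 3 0 * w 3 2) + v 0 1 * w 2 1 - v 1 1 * w 2 2 + v 3 1 * w 0 2
        - v 1 2 * w 3 2])
    (by intro c v w; funext i; fin_cases i <;> simp <;> ring)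
    (by intro v w z; funext i; fin_cases i <;> simp <;> ring)
    (by intro c v w; funext i; fin_cases i <;> simp <;> ring)
    (by intro v w z; funext i; fin_cases i <;> simp <;> ring)

def Rlin : ((Fin 4 → Fin 3 → ℝ) ⊗[ℝ] (Fin 4 → Fin 3 → ℝ)) →ₗ[ℝ] (Fin 3 → ℝ) :=
  TensorProduct.lift Bbil

lemma Rlin_apply (v w : Fin 4 → Fin 3 → ℝ) : Rlin (v ⊗ₜ[ℝ] w) = Bbil v w := rfl

lemma cv3_0 {α : Type*} (a : α) (u : Fin 2 → α) : Matrix.vecCons a u 0 = a := rfl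
lemma cv3_1 {α : Type*} (a : α) (u : Fin 2 → α) : Matrix.vecCons a u 1 = u 0 := rfl
lemma cv3_2 {α : Type*} (a : α) (u : Fin 2 → α) : Matrix.vecCons a u 2 = u 1 := rfl
lemma cv2_0 {α : Type*} (a : α) (u : Fin 1 → α) : Matrix.vecCons a u 0 = a := rfl
lemma cv2_1 {α : Type*} (a : α) (u : Fin 1 → α) : Matrix.vecCons a u 1 = u 0 := rfl
lemma cv1_0 {α : Type*} (a : α) (u : Fin 0 → α) : Matrix.vecCons a u 0 = a := rfl
lemma cv4_0 {α : Type*} (a : α) (u : Fin 3 → α) : Matrix.vecCons a u 0 = a := rfl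
lemma cv4_1 {α : Type*} (a : α) (u : Fin 3 → α) : Matrix.vecCons a u 1 = u 0 := rfl
lemma cv4_2 {α : Type*} (a : α) (u : Fin 3 → α) : Matrix.vecCons a u 2 = u 1 := rfl
lemma cv4_3 {α : Type*} (a : α) (u : Fin 3 → α) : Matrix.vecCons a u 3 = u 2 := rfl

end StmtAux
/-- a solution `U = (m,u₁,u₂)` of the symmetric first-order system
`∂ₜU + Σ_a (u_a I + (m/2)J_a) ∂_a U = L(U)` (written out componentwise below) subject to
the zero-relative-vorticity constraint `∇×u = m + m²/4` satisfies a quasilinear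
Klein–Gordon system `∂ₜₜU − ΔU + U = Σ A_{ij}(U)∂_i∂_j U + Σ A_{0j}(U)∂ₜ∂_j U + R(Ũ⊗Ũ)`,
with `A_{ij}(U), A_{0j}(U)` symmetric `3×3` matrices depending linearly on `U`,
`A_{ij} = A_{ji}`, and `R` linear in `Ũ⊗Ũ` where `Ũ = (U, ∂ₜU, ∂₁U, ∂₂U)`. -/
theorem stmt4 (m u1 u2 : ℝ → ℝ → ℝ → ℝ)
    (hm : ContDiff ℝ (⊤ : ℕ∞) (fun p : ℝ × ℝ × ℝ => m p.1 p.2.1 p.2.2))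
    (hu1 : ContDiff ℝ (⊤ : ℕ∞) (fun p : ℝ × ℝ × ℝ => u1 p.1 p.2.1 p.2.2))
    (hu2 : ContDiff ℝ (⊤ : ℕ∞) (fun p : ℝ × ℝ × ℝ => u2 p.1 p.2.1 p.2.2))
    -- the symmetric system ∂ₜU + Σ_a (u_a I + (m/2) J_a) ∂_a U = L(U), row by row:
    (hrow1 : ∀ t x y, pdt m t x y
      + (u1 t x y * pdx m t x y + (m t x y / 2) * pdx u1 t x y)
      + (u2 t x y * pdy m t x y + (m t x y / 2) * pdy u2 t x y)
      = -(pdx u1 t x y + pdy u2 t x y))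
    (hrow2 : ∀ t x y, pdt u1 t x y
      + ((m t x y / 2) * pdx m t x y + u1 t x y * pdx u1 t x y)
      + u2 t x y * pdy u1 t x y
      = -(pdx m t x y - u2 t x y))
    (hrow3 : ∀ t x y, pdt u2 t x y
      + u1 t x y * pdx u2 t x y
      + ((m t x y / 2) * pdy m t x y + u2 t x y * pdy u2 t x y)
      = -(pdy m t x y + u1 t x y))
    -- zero-relative-vorticity constraint ∇×u = m + m²/4:
    (hvort : ∀ t x y, pdx u2 t x y - pdy u1 t x y = m t x y + (m t x y)^2 / 4) :
    ∃ (A : Fin 2 → Fin 2 → (Fin 3 → ℝ) →ₗ[ℝ] Matrix (Fin 3) (Fin 3) ℝ)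
      (A0 : Fin 2 → (Fin 3 → ℝ) →ₗ[ℝ] Matrix (Fin 3) (Fin 3) ℝ)
      (R : ((Fin 4 → Fin 3 → ℝ) ⊗[ℝ] (Fin 4 → Fin 3 → ℝ)) →ₗ[ℝ] (Fin 3 → ℝ)),
      (∀ a b v, (A a b v).IsSymm) ∧ (∀ a b, A a b = A b a) ∧ (∀ j v, (A0 j v).IsSymm) ∧
      (∀ t x y,
        letI U := Uvec m u1 u2
        letI tU : Fin 4 → Fin 3 → ℝ :=
          ![U t x y, vdt U t x y, vsp 0 U t x y, vsp 1 U t x y]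
        vdt (vdt U) t x y - (vsp 0 (vsp 0 U) t x y + vsp 1 (vsp 1 U) t x y) + U t x y
          = (∑ a : Fin 2, ∑ b : Fin 2, (A a b (U t x y)).mulVec (vsp a (vsp b U) t x y))
            + (∑ j : Fin 2, (A0 j (U t x y)).mulVec (vdt (vsp j U) t x y))
            + R (tU ⊗ₜ[ℝ] tU)) := by
  obtain ⟨M, hMe, hM⟩ : ∃ M' : E3' → ℝ, (∀ t x y, m t x y = M' (t,x,y)) ∧ ContDiff ℝ (⊤ : ℕ∞) M' :=
    ⟨fun p => m p.1 p.2.1 p.2.2, fun _ _ _ => rfl, hm⟩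
  obtain ⟨M1, hM1e, hM1⟩ : ∃ M' : E3' → ℝ, (∀ t x y, u1 t x y = M' (t,x,y)) ∧ ContDiff ℝ (⊤ : ℕ∞) M' :=
    ⟨fun p => u1 p.1 p.2.1 p.2.2, fun _ _ _ => rfl, hu1⟩
  obtain ⟨M2, hM2e, hM2⟩ : ∃ M' : E3' → ℝ, (∀ t x y, u2 t x y = M' (t,x,y)) ∧ ContDiff ℝ (⊤ : ℕ∞) M' :=
    ⟨fun p => u2 p.1 p.2.1 p.2.2, fun _ _ _ => rfl, hu2⟩
  have dM : Differentiable ℝ M := hM.differentiable (by simp)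
  have dM1 : Differentiable ℝ M1 := hM1.differentiable (by simp)
  have dM2 : Differentiable ℝ M2 := hM2.differentiable (by simp)
  have dDM : ∀ v, Differentiable ℝ (DD v M) := fun v => (contDiff_DD v hM).differentiable (by simp)
  have dDM1 : ∀ v, Differentiable ℝ (DD v M1) := fun v => (contDiff_DD v hM1).differentiable (by simp)
  have dDM2 : ∀ v, Differentiable ℝ (DD v M2) := fun v => (contDiff_DD v hM2).differentiable (by simp)
  -- first-order conversion lemmas
  have e_m_t := pdt_eq dM hMe
  have e_m_x := pdx_eq dM hMe
  have e_m_y := pdy_eq dM hMe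
  have e_u1_t := pdt_eq dM1 hM1e
  have e_u1_x := pdx_eq dM1 hM1e
  have e_u1_y := pdy_eq dM1 hM1e
  have e_u2_t := pdt_eq dM2 hM2e
  have e_u2_x := pdx_eq dM2 hM2e
  have e_u2_y := pdy_eq dM2 hM2e
  -- the four equations, in uncurried form
  have hE1 : ∀ p : E3', DD ee1 M p
      + (M1 p * DD ee2 M p + M p / 2 * DD ee2 M1 p)
      + (M2 p * DD ee3 M p + M p / 2 * DD ee3 M2 p)
      = -(DD ee2 M1 p + DD ee3 M2 p) := by
    rintro ⟨t, x, y⟩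
    have := hrow1 t x y
    simp only [e_m_t, e_m_x, e_m_y, e_u1_x, e_u2_y, hMe, hM1e, hM2e] at this
    exact this
  have hE2 : ∀ p : E3', DD ee1 M1 p
      + (M p / 2 * DD ee2 M p + M1 p * DD ee2 M1 p)
      + M2 p * DD ee3 M1 p
      = -(DD ee2 M p - M2 p) := by
    rintro ⟨t, x, y⟩
    have := hrow2 t x y
    simp only [e_u1_t, e_m_x, e_u1_x, e_u1_y, hMe, hM1e, hM2e] at this
    exact this
  have hE3 : ∀ p : E3', DD ee1 M2 p
      + M1 p * DD ee2 M2 p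
      + (M p / 2 * DD ee3 M p + M2 p * DD ee3 M2 p)
      = -(DD ee3 M p + M1 p) := by
    rintro ⟨t, x, y⟩
    have := hrow3 t x y
    simp only [e_u2_t, e_u2_x, e_m_y, e_u2_y, hMe, hM1e, hM2e] at this
    exact this
  have hC : ∀ p : E3', DD ee2 M2 p - DD ee3 M1 p = M p + (M p)^2 / 4 := by
    rintro ⟨t, x, y⟩
    have := hvort t x y
    simp only [e_u2_x, e_u1_y, hMe] at this
    exact this
  -- differentiated versions
  have hE1d : ∀ (v p : E3'), DD v (DD ee1 M) p
      + (M1 p * DD v (DD ee2 M) p + DD ee2 M p * DD v M1 p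
         + (M p / 2 * DD v (DD ee2 M1) p + DD ee2 M1 p * (DD v M p / 2)))
      + (M2 p * DD v (DD ee3 M) p + DD ee3 M p * DD v M2 p
         + (M p / 2 * DD v (DD ee3 M2) p + DD ee3 M2 p * (DD v M p / 2)))
      = -(DD v (DD ee2 M1) p + DD v (DD ee3 M2) p) := by
    intro v p
    have hfun : (fun p => DD ee1 M p
        + (M1 p * DD ee2 M p + M p / 2 * DD ee2 M1 p)
        + (M2 p * DD ee3 M p + M p / 2 * DD ee3 M2 p))
        = (fun p => -(DD ee2 M1 p + DD ee3 M2 p)) := funext hE1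
    have hDD := congrArg (fun G => DD v G p) hfun
    simp (disch := fun_prop) only [DD_add, DD_mul, DD_sub, DD_neg, DD_div_const, DD_const] at hDD
    linear_combination hDD
  have hE2d : ∀ (v p : E3'), DD v (DD ee1 M1) p
      + (M p / 2 * DD v (DD ee2 M) p + DD ee2 M p * (DD v M p / 2)
         + (M1 p * DD v (DD ee2 M1) p + DD ee2 M1 p * DD v M1 p))
      + (M2 p * DD v (DD ee3 M1) p + DD ee3 M1 p * DD v M2 p)
      = -(DD v (DD ee2 M) p - DD v M2 p) := by
    intro v p
    have hfun : (fun p => DD ee1 M1 p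
        + (M p / 2 * DD ee2 M p + M1 p * DD ee2 M1 p)
        + M2 p * DD ee3 M1 p)
        = (fun p => -(DD ee2 M p - M2 p)) := funext hE2
    have hDD := congrArg (fun G => DD v G p) hfun
    simp (disch := fun_prop) only [DD_add, DD_mul, DD_sub, DD_neg, DD_div_const, DD_const] at hDD
    linear_combination hDD
  have hE3d : ∀ (v p : E3'), DD v (DD ee1 M2) p
      + (M1 p * DD v (DD ee2 M2) p + DD ee2 M2 p * DD v M1 p)
      + (M p / 2 * DD v (DD ee3 M) p + DD ee3 M p * (DD v M p / 2)
         + (M2 p * DD v (DD ee3 M2) p + DD ee3 M2 p * DD v M2 p))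
      = -(DD v (DD ee3 M) p + DD v M1 p) := by
    intro v p
    have hfun : (fun p => DD ee1 M2 p
        + M1 p * DD ee2 M2 p
        + (M p / 2 * DD ee3 M p + M2 p * DD ee3 M2 p))
        = (fun p => -(DD ee3 M p + M1 p)) := funext hE3
    have hDD := congrArg (fun G => DD v G p) hfun
    simp (disch := fun_prop) only [DD_add, DD_mul, DD_sub, DD_neg, DD_div_const, DD_const] at hDD
    linear_combination hDD
  have hCd : ∀ (v p : E3'), DD v (DD ee2 M2) p - DD v (DD ee3 M1) p
      = DD v M p + 2 * M p * DD v M p / 4 := by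
    intro v p
    have hfun : (fun p => DD ee2 M2 p - DD ee3 M1 p)
        = (fun p => M p + (M p)^2 / 4) := funext hC
    have hDD := congrArg (fun G => DD v G p) hfun
    simp (disch := fun_prop) only [DD_add, DD_mul, DD_sub, DD_neg, DD_div_const, DD_sq, DD_const] at hDD
    linear_combination hDD
  -- mixed-derivative swaps, to canonical order (ee1 outermost, then ee2)
  have sw21M : ∀ p, DD ee2 (DD ee1 M) p = DD ee1 (DD ee2 M) p := DD_swap hM ee2 ee1
  have sw31M : ∀ p, DD ee3 (DD ee1 M) p = DD ee1 (DD ee3 M) p := DD_swap hM ee3 ee1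
  have sw32M : ∀ p, DD ee3 (DD ee2 M) p = DD ee2 (DD ee3 M) p := DD_swap hM ee3 ee2
  have sw21M1 : ∀ p, DD ee2 (DD ee1 M1) p = DD ee1 (DD ee2 M1) p := DD_swap hM1 ee2 ee1
  have sw31M1 : ∀ p, DD ee3 (DD ee1 M1) p = DD ee1 (DD ee3 M1) p := DD_swap hM1 ee3 ee1
  have sw32M1 : ∀ p, DD ee3 (DD ee2 M1) p = DD ee2 (DD ee3 M1) p := DD_swap hM1 ee3 ee2
  have sw21M2 : ∀ p, DD ee2 (DD ee1 M2) p = DD ee1 (DD ee2 M2) p := DD_swap hM2 ee2 ee1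
  have sw31M2 : ∀ p, DD ee3 (DD ee1 M2) p = DD ee1 (DD ee3 M2) p := DD_swap hM2 ee3 ee1
  have sw32M2 : ∀ p, DD ee3 (DD ee2 M2) p = DD ee2 (DD ee3 M2) p := DD_swap hM2 ee3 ee2
  have Dt : ∀ (G : E3' → ℝ), Differentiable ℝ G → ∀ t x y : ℝ,
      deriv (fun s => G (s,x,y)) t = DD ee1 G (t,x,y) :=
    fun G hG t x y => pdt_eq hG (fun _ _ _ => rfl) t x y
  have Dx : ∀ (G : E3' → ℝ), Differentiable ℝ G → ∀ t x y : ℝ,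
      deriv (fun s => G (t,s,y)) x = DD ee2 G (t,x,y) :=
    fun G hG t x y => pdx_eq hG (fun _ _ _ => rfl) t x y
  have Dy : ∀ (G : E3' → ℝ), Differentiable ℝ G → ∀ t x y : ℝ,
      deriv (fun s => G (t,x,s)) y = DD ee3 G (t,x,y) :=
    fun G hG t x y => pdy_eq hG (fun _ _ _ => rfl) t x y
  refine ⟨Alin, A0lin, Rlin, Alin_symm, Alin_comm, A0lin_symm, ?_⟩
  intro t x y
  -- raw-form second-derivative conversion lemmas
  simp only [pdt, pdx, pdy] at e_m_t e_m_x e_m_y e_u1_t e_u1_x e_u1_y e_u2_t e_u2_x e_u2_y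
  funext i
  fin_cases i <;>
    (simp only [vdt, vsp, vd1, vd2, Uvec, Fin.isValue, Fin.zero_eta, Fin.mk_one, Fin.reduceFinMk,
      cv3_0, cv3_1, cv3_2, cv2_0, cv2_1, cv1_0, cv4_0, cv4_1, cv4_2, cv4_3,
      Fin.sum_univ_two, Rlin_apply, Bbil, LinearMap.mk₂_apply,
      Alin_apply, A0lin_apply, Pi.add_apply, Pi.sub_apply,
      Matrix.add_mulVec, Matrix.smul_mulVec, Pi.smul_apply, smul_eq_mul,
      KA, KA0, Matrix.mulVec, dotProduct, Fin.sum_univ_three,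
      Matrix.of_apply, Matrix.cons_val', Matrix.cons_val_zero, Matrix.cons_val_one,
      Matrix.head_cons, Matrix.head_fin_const, Matrix.empty_val',
      Matrix.cons_val_fin_one, Matrix.vecHead, Matrix.vecTail];
     try simp only [e_m_t, e_m_x, e_m_y, e_u1_t, e_u1_x, e_u1_y, e_u2_t, e_u2_x, e_u2_y];
     try simp only [Dt _ (dDM ee1), Dt _ (dDM ee2), Dt _ (dDM ee3),
      Dt _ (dDM1 ee1), Dt _ (dDM1 ee2), Dt _ (dDM1 ee3),
      Dt _ (dDM2 ee1), Dt _ (dDM2 ee2), Dt _ (dDM2 ee3),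
      Dx _ (dDM ee1), Dx _ (dDM ee2), Dx _ (dDM ee3),
      Dx _ (dDM1 ee1), Dx _ (dDM1 ee2), Dx _ (dDM1 ee3),
      Dx _ (dDM2 ee1), Dx _ (dDM2 ee2), Dx _ (dDM2 ee3),
      Dy _ (dDM ee1), Dy _ (dDM ee2), Dy _ (dDM ee3),
      Dy _ (dDM1 ee1), Dy _ (dDM1 ee2), Dy _ (dDM1 ee3),
      Dy _ (dDM2 ee1), Dy _ (dDM2 ee2), Dy _ (dDM2 ee3)];
     try simp only [hMe, hM1e, hM2e];
     try simp only [sw21M, sw21M1, sw31M, sw31M1, sw21M2, sw31M2, sw32M, sw32M1, sw32M2])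
  · -- component 0
    have a1 := hE1d ee1 (t,x,y); have a2 := hE2d ee2 (t,x,y)
    have a3 := hE3d ee3 (t,x,y); have a4 := hC (t,x,y)
    simp only [sw21M, sw21M1, sw31M, sw31M1, sw21M2, sw31M2, sw32M, sw32M1, sw32M2] at a1 a2 a3 a4 ⊢
    linear_combination a1 - a2 - a3 - a4
  · -- component 1
    have a1 := hE1d ee2 (t,x,y); have a2 := hE2d ee1 (t,x,y)
    have a3 := hCd ee3 (t,x,y); have a4 := hE3 (t,x,y)
    simp only [sw21M, sw21M1, sw31M, sw31M1, sw21M2, sw31M2, sw32M, sw32M1, sw32M2] at a1 a2 a3 a4 ⊢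
    linear_combination (-1 : ℝ) * a1 + a2 + a3 + a4
  · -- component 2
    have a1 := hE1d ee3 (t,x,y); have a2 := hE3d ee1 (t,x,y)
    have a3 := hCd ee2 (t,x,y); have a4 := hE2 (t,x,y)
    simp only [sw21M, sw21M1, sw31M, sw31M1, sw21M2, sw31M2, sw32M, sw32M1, sw32M2] at a1 a2 a3 a4 ⊢
    linear_combination (-1 : ℝ) * a1 + a2 - a3 - a4
end

section
/- Suppose a nonnegative C¹ function e : [0,T] → ℝ satisfies e'(t) ≤ C e(t)(e(t) + δ/(1+t)) with C, δ > 0 and e(0) ≤ E₀ > 0. Then for all t in [0,T] with (1+t)^{1+Cδ} − 1 < (1+Cδ)/(C E₀), one has the bound e(t) ≤ (1+t)^{Cδ} ( E₀^{−1} − C/(1+Cδ) · [(1+t)^{1+Cδ} − 1] )^{−1}. -/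
/-!
With `a = Cδ`, the hypothesis reads `e' ≤ C e² + a e/(1+t)`. For `c ≥ C` the function
`B_c(t) = (1+t)^a / (E₀⁻¹ - c/(1+a)·((1+t)^{1+a} - 1))` solves the Riccati equation
`B' = c B² + a B/(1+t)` with `B_c(0) = E₀` (the substitution `y = 1/B` linearises it). For `c > C`
and `B > 0` we have `c B² > C B²`, so `B_c` is a strict upper barrier and `e ≤ B_c` by the fencing
theorem; letting `c ↓ C` gives `e ≤ B_C`, which is the claimed bound.
-/

open Set Filter Topology

noncomputable section

namespace RiccatiBarrier

def denom (a c E₀ t : ℝ) : ℝ := E₀⁻¹ - c / (1 + a) * ((1 + t) ^ (1 + a) - 1)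

def barrier (a c E₀ t : ℝ) : ℝ := (1 + t) ^ a * (denom a c E₀ t)⁻¹

variable {a c E₀ t : ℝ}

theorem barrier_zero : barrier a c E₀ 0 = E₀ := by
  simp [barrier, denom]

theorem hasDerivAt_denom (ha : 1 + a ≠ 0) (ht : 0 < 1 + t) :
    HasDerivAt (denom a c E₀) (-(c * (1 + t) ^ a)) t := by
  have hpow : HasDerivAt (fun s : ℝ => (1 + s) ^ (1 + a)) (1 * (1 + a) * (1 + t) ^ a) t := by
    simpa using ((hasDerivAt_id t).const_add 1).rpow_const (p := 1 + a) (Or.inl ht.ne')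
  refine (((hpow.sub_const 1).const_mul (c / (1 + a))).const_sub E₀⁻¹).congr_deriv ?_
  field_simp

theorem hasDerivAt_barrier (ha : 1 + a ≠ 0) (ht : 0 < 1 + t) (hD : denom a c E₀ t ≠ 0) :
    HasDerivAt (barrier a c E₀)
      (c * barrier a c E₀ t ^ 2 + a * barrier a c E₀ t / (1 + t)) t := by
  have hpow : HasDerivAt (fun s : ℝ => (1 + s) ^ a) (1 * a * (1 + t) ^ (a - 1)) t :=
    ((hasDerivAt_id t).const_add 1).rpow_const (Or.inl ht.ne')
  refine (hpow.mul ((hasDerivAt_denom (E₀ := E₀) (c := c) ha ht).inv hD)).congr_deriv ?_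
  rw [Pi.inv_apply, Real.rpow_sub ht, Real.rpow_one, barrier]
  field_simp
  ring

theorem denom_antitoneOn (hc : 0 ≤ c) (ha : 0 < 1 + a) :
    AntitoneOn (denom a c E₀) (Ici 0) := by
  intro x hx y _ hxy
  have h1x : (0 : ℝ) ≤ 1 + x := by linarith [mem_Ici.mp hx]
  unfold denom
  gcongr

theorem denom_pos_iff (hc : 0 < c) (hE₀ : 0 < E₀) (ha : 0 < 1 + a) :
    0 < denom a c E₀ t ↔ (1 + t) ^ (1 + a) - 1 < (1 + a) / (c * E₀) := by
  rw [denom, sub_pos, ← lt_div_iff₀' (by positivity),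
    show E₀⁻¹ / (c / (1 + a)) = (1 + a) / (c * E₀) by field_simp]

variable {C T : ℝ} {e e' : ℝ → ℝ}

theorem le_barrier_of_lt (hC : 0 ≤ C) (hCc : C < c) (ha : 0 < 1 + a)
    (hderiv : ∀ t ∈ Icc 0 T, HasDerivAt e (e' t) t)
    (hineq : ∀ t ∈ Icc 0 T, e' t ≤ C * e t ^ 2 + a * e t / (1 + t))
    (hinit : e 0 ≤ E₀) (ht : t ∈ Icc 0 T) (hD : 0 < denom a c E₀ t) :
    e t ≤ barrier a c E₀ t := by
  have hsub : Icc 0 t ⊆ Icc 0 T := Icc_subset_Icc_right ht.2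
  have hDpos : ∀ x ∈ Icc 0 t, 0 < denom a c E₀ x := fun x hx =>
    hD.trans_le (denom_antitoneOn (hC.trans hCc.le) ha hx.1 ht.1 hx.2)
  have hB : ∀ x ∈ Icc 0 t, HasDerivAt (barrier a c E₀)
      (c * barrier a c E₀ x ^ 2 + a * barrier a c E₀ x / (1 + x)) x := fun x hx =>
    hasDerivAt_barrier ha.ne' (by linarith [hx.1]) (hDpos x hx).ne'
  refine image_le_of_deriv_right_lt_deriv_boundary'
    (fun x hx => (hderiv x (hsub hx)).continuousAt.continuousWithinAt)
    (fun x hx => (hderiv x (hsub (Ico_subset_Icc_self hx))).hasDerivWithinAt)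
    (by rwa [barrier_zero]) (fun x hx => (hB x hx).continuousAt.continuousWithinAt)
    (fun x hx => (hB x (Ico_subset_Icc_self hx)).hasDerivWithinAt) ?_ ⟨ht.1, le_rfl⟩
  intro x hx hex
  have hx' := Ico_subset_Icc_self hx
  have hBpos : 0 < barrier a c E₀ x :=
    mul_pos (Real.rpow_pos_of_pos (by linarith [hx'.1]) a) (inv_pos.2 (hDpos x hx'))
  calc e' x ≤ C * e x ^ 2 + a * e x / (1 + x) := hineq x (hsub hx')
    _ < c * barrier a c E₀ x ^ 2 + a * barrier a c E₀ x / (1 + x) := by rw [hex]; gcongr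

theorem le_barrier (hC : 0 ≤ C) (ha : 0 < 1 + a)
    (hderiv : ∀ t ∈ Icc 0 T, HasDerivAt e (e' t) t)
    (hineq : ∀ t ∈ Icc 0 T, e' t ≤ C * e t ^ 2 + a * e t / (1 + t))
    (hinit : e 0 ≤ E₀) (ht : t ∈ Icc 0 T) (hD : 0 < denom a C E₀ t) :
    e t ≤ barrier a C E₀ t := by
  have hcont : ContinuousAt (fun c => denom a c E₀ t) C := by unfold denom; fun_prop
  have hlim : Tendsto (fun c => barrier a c E₀ t) (𝓝[>] C) (𝓝 (barrier a C E₀ t)) :=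
    (continuousAt_const.mul (hcont.inv₀ hD.ne')).tendsto.mono_left nhdsWithin_le_nhds
  have hDc : ∀ᶠ c in 𝓝[>] C, 0 < denom a c E₀ t :=
    (hcont.eventually (lt_mem_nhds hD)).filter_mono nhdsWithin_le_nhds
  refine ge_of_tendsto hlim ((hDc.and self_mem_nhdsWithin).mono fun c hc => ?_)
  exact le_barrier_of_lt hC hc.2 ha hderiv hineq hinit ht hc.1

end RiccatiBarrier

end

open RiccatiBarrier in
theorem stmt7_general (T C δ E₀ : ℝ) (hC : 0 < C) (hδ : 0 < δ) (hE₀ : 0 < E₀)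
    (e e' : ℝ → ℝ)
    (hderiv : ∀ t ∈ Set.Icc (0:ℝ) T, HasDerivAt e (e' t) t)
    (hineq : ∀ t ∈ Set.Icc (0:ℝ) T, e' t ≤ C * e t * (e t + δ / (1+t)))
    (hinit : e 0 ≤ E₀) :
    ∀ t ∈ Set.Icc (0:ℝ) T,
      (1+t) ^ (1 + C*δ) - 1 < (1 + C*δ) / (C * E₀) →
      e t ≤ (1+t) ^ (C*δ) *
        (E₀⁻¹ - C / (1 + C*δ) * ((1+t) ^ (1 + C*δ) - 1))⁻¹ := by
  intro t ht hcond
  have ha : 0 < 1 + C * δ := by positivity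
  exact le_barrier hC.le ha hderiv (fun x hx => (hineq x hx).trans_eq (by ring)) hinit ht
    ((denom_pos_iff hC hE₀ ha).2 hcond)

/-- Gronwall-type estimate. If a nonnegative `C¹` function `e` on `[0,T]`
satisfies `e'(t) ≤ C e(t)(e(t) + δ/(1+t))` with `C, δ > 0` and `e(0) ≤ E₀`, then for all
`t ∈ [0,T]` with `(1+t)^{1+Cδ} − 1 < (1+Cδ)/(C E₀)`, one has
`e(t) ≤ (1+t)^{Cδ} (E₀⁻¹ − C/(1+Cδ)·[(1+t)^{1+Cδ} − 1])⁻¹`. -/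
theorem stmt7 (T C δ E₀ : ℝ) (hT : 0 ≤ T) (hC : 0 < C) (hδ : 0 < δ) (hE₀ : 0 < E₀)
    (e e' : ℝ → ℝ)
    (hnn : ∀ t ∈ Set.Icc (0:ℝ) T, 0 ≤ e t)
    (hderiv : ∀ t ∈ Set.Icc (0:ℝ) T, HasDerivAt e (e' t) t)
    (hcont : ContinuousOn e' (Set.Icc (0:ℝ) T))
    (hineq : ∀ t ∈ Set.Icc (0:ℝ) T, e' t ≤ C * e t * (e t + δ / (1+t)))
    (hinit : e 0 ≤ E₀) :
    ∀ t ∈ Set.Icc (0:ℝ) T,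
      (1+t) ^ (1 + C*δ) - 1 < (1 + C*δ) / (C * E₀) →
      e t ≤ (1+t) ^ (C*δ) *
        (E₀⁻¹ - C / (1 + C*δ) * ((1+t) ^ (1 + C*δ) - 1))⁻¹ :=
  stmt7_general T C δ E₀ hC hδ hE₀ e e' hderiv hineq hinit
end
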